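/- arXiv:1903.08327 — 3 statements merged into one kernel-verified Lean document; each statement's English description precedes it below -/
import Mathlib

section
/- Suppose V : ℝⁿ → ℝ is continuously differentiable, f : ℝⁿ → ℝⁿ is Lipschitz, and for every x with V(x) = 0 we have ⟨∇V(x), f(x)⟩ > 0. Then the set {x : V(x) ≥ 0} is forward invariant under the flow of ẋ = f(x): any solution x(t) with V(x(0)) ≥ 0 satisfies V(x(t)) ≥ 0 for all t ≥ 0 in its interval of existence. -/
open RealInnerProductSpace Set

/- Along a solution, `g t = V (x t)` has derivative `⟪∇V (x t), f (x t)⟫` by the chain rule,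
which is positive whenever `g t = 0`. A real function that is strictly increasing through
each of its zeros cannot pass from `0 ≤ g` to `g < 0`: this is the fencing theorem
`image_le_of_deriv_right_lt_deriv_boundary'` applied to `-g` against the barrier `0`. -/

theorem nonneg_of_hasDerivWithinAt_pos_of_eq_zero {g g' : ℝ → ℝ} {a b : ℝ}
    (hg : ContinuousOn g (Icc a b))
    (hg' : ∀ t ∈ Ico a b, HasDerivWithinAt g (g' t) (Ici t) t)
    (ha : 0 ≤ g a) (hzero : ∀ t ∈ Ico a b, g t = 0 → 0 < g' t) :
    ∀ t ∈ Icc a b, 0 ≤ g t := by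
  have hle : ∀ ⦃t⦄, t ∈ Icc a b → -g t ≤ 0 :=
    image_le_of_deriv_right_lt_deriv_boundary' (f' := fun t => -g' t) hg.neg
      (fun t ht => (hg' t ht).neg) (by simpa using ha) continuousOn_const
      (fun _ _ => hasDerivWithinAt_const _ _ (0 : ℝ))
      (fun t ht hgt => neg_neg_of_pos (hzero t ht (neg_eq_zero.mp hgt)))
  exact fun t ht => neg_nonpos.mp (hle ht)

theorem hasDerivAt_comp_inner_gradient {E : Type*} [NormedAddCommGroup E]
    [InnerProductSpace ℝ E] [CompleteSpace E] {V : E → ℝ} {x : ℝ → E} {v : E} {t : ℝ}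
    (hV : DifferentiableAt ℝ V (x t)) (hx : HasDerivAt x v t) :
    HasDerivAt (fun s => V (x s)) ⟪gradient V (x t), v⟫ t := by
  simpa [Function.comp_def] using hV.hasGradientAt.hasFDerivAt.comp_hasDerivAt t hx

theorem barrier_forward_invariance_general {n : ℕ}
    (V : EuclideanSpace ℝ (Fin n) → ℝ) (hV : ContDiff ℝ 1 V)
    (f : EuclideanSpace ℝ (Fin n) → EuclideanSpace ℝ (Fin n))
    (hbarrier : ∀ x, V x = 0 → 0 < ⟪gradient V x, f x⟫)
    (T : ℝ) (x : ℝ → EuclideanSpace ℝ (Fin n))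
    (hx : ∀ t ∈ Set.Icc (0 : ℝ) T, HasDerivAt x (f (x t)) t)
    (h0 : 0 ≤ V (x 0)) :
    ∀ t ∈ Set.Icc (0 : ℝ) T, 0 ≤ V (x t) := by
  have hderiv : ∀ t ∈ Icc 0 T, HasDerivAt (fun s => V (x s)) ⟪gradient V (x t), f (x t)⟫ t :=
    fun t ht => hasDerivAt_comp_inner_gradient (hV.differentiable one_ne_zero _) (hx t ht)
  exact nonneg_of_hasDerivWithinAt_pos_of_eq_zero
    (fun t ht => (hderiv t ht).continuousAt.continuousWithinAt)
    (fun t ht => (hderiv t (Ico_subset_Icc_self ht)).hasDerivWithinAt) h0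
    (fun t _ hzero => hbarrier _ hzero)

/-- barrier-certificate forward invariance. If `V` is C¹, `f` is
Lipschitz, and `⟨∇V(x), f(x)⟩ > 0` whenever `V(x) = 0`, then the superlevel set
`{V ≥ 0}` is forward invariant: any solution of `ẋ = f(x)` on `[0,T]` with
`V(x(0)) ≥ 0` satisfies `V(x(t)) ≥ 0` for all `t ∈ [0,T]`. -/
theorem barrier_forward_invariance {n : ℕ} {K : NNReal}
    (V : EuclideanSpace ℝ (Fin n) → ℝ) (hV : ContDiff ℝ 1 V)
    (f : EuclideanSpace ℝ (Fin n) → EuclideanSpace ℝ (Fin n))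
    (hf : LipschitzWith K f)
    (hbarrier : ∀ x, V x = 0 → 0 < ⟪gradient V x, f x⟫)
    (T : ℝ) (x : ℝ → EuclideanSpace ℝ (Fin n))
    (hx : ∀ t ∈ Set.Icc (0 : ℝ) T, HasDerivAt x (f (x t)) t)
    (h0 : 0 ≤ V (x 0)) :
    ∀ t ∈ Set.Icc (0 : ℝ) T, 0 ≤ V (x t) :=
  barrier_forward_invariance_general V hV f hbarrier T x hx h0
end

section
/- Consider a hybrid system with continuous dynamics ẋ = f(x) on ℝⁿ \ S, guard set S ⊂ ℝⁿ, and reset map Δ : S → ℝⁿ. Suppose V : ℝⁿ → ℝ is C¹ and (1) ⟨∇V(x), f(x)⟩ > 0 whenever V(x) = 0 and x ∉ S, and (2) V(Δ(x)) ≥ 0 for all x ∈ S with V(x) ≥ 0. Then every hybrid execution starting in {V ≥ 0} remains in {V ≥ 0} for all time. -/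
/-!
Along an arc, `V ∘ x` can only reach `0` off the guard, where its derivative `⟪∇V, f⟫` is
positive, so it cannot cross below `0` (a fencing argument); resets keep `{V ≥ 0}` by
hypothesis, and induction over the arcs finishes.
-/

open RealInnerProductSpace

/-- A hybrid execution of the hybrid system with continuous dynamics `ẋ = f(x)`
off the guard `S`, and reset map `Δ` applied on `S`: a sequence of event times
`τ k` and continuous arcs `arc k` defined on `[τ k, τ (k+1)]`, flowing along
`f`, staying off the guard in the interior of each arc, hitting the guard at
the end of each arc, and jumping via `Δ` between consecutive arcs. -/
structure HybridExecution {X : Type*} [NormedAddCommGroup X] [NormedSpace ℝ X]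
    (f : X → X) (S : Set X) (Δ : X → X) where
  τ : ℕ → ℝ
  mono : Monotone τ
  arc : ℕ → ℝ → X
  flow : ∀ k, ∀ t ∈ Set.Icc (τ k) (τ (k + 1)), HasDerivAt (arc k) (f (arc k t)) t
  offGuard : ∀ k, ∀ t ∈ Set.Ico (τ k) (τ (k + 1)), arc k t ∉ S
  hitGuard : ∀ k, arc k (τ (k + 1)) ∈ S
  reset : ∀ k, arc (k + 1) (τ (k + 1)) = Δ (arc k (τ (k + 1)))

open Set

theorem HybridExecution.arc_mem_of_flow_of_reset {X : Type*} [NormedAddCommGroup X]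
    [NormedSpace ℝ X] {f : X → X} {S : Set X} {Δ : X → X} (e : HybridExecution f S Δ)
    {K : Set X}
    (hflow : ∀ k, e.arc k (e.τ k) ∈ K → ∀ t ∈ Icc (e.τ k) (e.τ (k + 1)), e.arc k t ∈ K)
    (hjump : ∀ x ∈ S, x ∈ K → Δ x ∈ K) (h0 : e.arc 0 (e.τ 0) ∈ K) :
    ∀ k, ∀ t ∈ Icc (e.τ k) (e.τ (k + 1)), e.arc k t ∈ K := by
  have hstart : ∀ k, e.arc k (e.τ k) ∈ K := by
    intro k
    induction k with
    | zero => exact h0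
    | succ k ih =>
      rw [e.reset k]
      exact hjump _ (e.hitGuard k) (hflow k ih _ ⟨e.mono k.le_succ, le_rfl⟩)
  exact fun k => hflow k (hstart k)

section Flow

variable {E : Type*} [NormedAddCommGroup E] [InnerProductSpace ℝ E] [CompleteSpace E]

theorem HasGradientAt.comp_hasDerivAt {V : E → ℝ} {g : E} {x : ℝ → E} {v : E} {t : ℝ}
    (hV : HasGradientAt V g (x t)) (hx : HasDerivAt x v t) :
    HasDerivAt (V ∘ x) ⟪g, v⟫ t :=
  hV.hasFDerivAt.comp_hasDerivAt t hx

theorem nonneg_comp_of_inner_gradient_pos {f : E → E} {S : Set E} {V : E → ℝ}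
    (hV : Differentiable ℝ V) (hflow : ∀ x ∉ S, V x = 0 → 0 < ⟪gradient V x, f x⟫)
    {a b : ℝ} {x : ℝ → E} (hx : ∀ t ∈ Icc a b, HasDerivAt x (f (x t)) t)
    (hoff : ∀ t ∈ Ico a b, x t ∉ S) (ha : 0 ≤ V (x a)) :
    ∀ t ∈ Icc a b, 0 ≤ V (x t) := by
  have hderiv : ∀ t ∈ Icc a b, HasDerivAt (V ∘ x) ⟪gradient V (x t), f (x t)⟫ t :=
    fun t ht => (hV _).hasGradientAt.comp_hasDerivAt (hx t ht)
  exact image_le_of_deriv_right_lt_deriv_boundary' (f := fun _ => 0) (f' := fun _ => 0)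
    continuousOn_const (fun _ _ => hasDerivWithinAt_const _ _ _) ha
    (fun t ht => (hderiv t ht).continuousAt.continuousWithinAt)
    (fun t ht => (hderiv t (Ico_subset_Icc_self ht)).hasDerivWithinAt)
    (fun t ht h => hflow _ (hoff t ht) h.symm)

end Flow

/-- hybrid forward invariance. If `V` is C¹ with
`⟨∇V(x), f(x)⟩ > 0` whenever `V(x) = 0` and `x ∉ S`, and `V(Δ(x)) ≥ 0` for all
`x ∈ S` with `V(x) ≥ 0`, then every hybrid execution starting in `{V ≥ 0}`
remains in `{V ≥ 0}` for all time. -/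
theorem hybrid_forward_invariance {n : ℕ}
    (f : EuclideanSpace ℝ (Fin n) → EuclideanSpace ℝ (Fin n))
    (S : Set (EuclideanSpace ℝ (Fin n)))
    (Δ : EuclideanSpace ℝ (Fin n) → EuclideanSpace ℝ (Fin n))
    (V : EuclideanSpace ℝ (Fin n) → ℝ) (hV : ContDiff ℝ 1 V)
    (hflow : ∀ x ∉ S, V x = 0 → 0 < ⟪gradient V x, f x⟫)
    (hjump : ∀ x ∈ S, 0 ≤ V x → 0 ≤ V (Δ x))
    (e : HybridExecution f S Δ)
    (h0 : 0 ≤ V (e.arc 0 (e.τ 0))) :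
    ∀ k, ∀ t ∈ Set.Icc (e.τ k) (e.τ (k + 1)), 0 ≤ V (e.arc k t) :=
  e.arc_mem_of_flow_of_reset (K := {x | 0 ≤ V x})
    (fun k => nonneg_comp_of_inner_gradient_pos (hV.differentiable one_ne_zero) hflow
      (e.flow k) (e.offGuard k))
    hjump h0
end

section
/- Let e_p : ℝⁿ → ℝⁿ be a polynomial with e_p(x) ≥ |f(x) - f_p(x) + (g(x) - g_p(x))u| componentwise for all x ∈ Z and all u ∈ U. If q : ℝⁿ → ℝⁿ satisfies qⱼ(x) ≥ |∂V/∂xⱼ(x) · (e_p)ⱼ(x)| for each j and all x ∈ Z, then for all x ∈ Z and u ∈ U: ⟨∇V(x), f_p(x) + g_p(x)u⟩ + Σⱼ qⱼ(x) ≥ ⟨∇V(x), f(x) + g(x)u⟩ - 2Σⱼ qⱼ(x) + Σⱼ qⱼ(x), and in particular if ⟨∇V(x), f_p(x)+g_p(x)u⟩ - Σⱼ qⱼ(x) > 0 then ⟨∇V(x), f(x)+g(x)u⟩ > 0. -/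
open Matrix

/-- transferring the barrier condition from approximate polynomial
dynamics `f_p, g_p` to the true dynamics `f, g` using the error bound `e_p`
and the Lie-derivative error bounds `q`. -/
theorem barrier_transfer_error_bounds {n m : ℕ}
    (Z : Set (Fin n → ℝ)) (U : Set (Fin m → ℝ))
    (f fp : (Fin n → ℝ) → (Fin n → ℝ))
    (g gp : (Fin n → ℝ) → Matrix (Fin n) (Fin m) ℝ)
    (e : (Fin n → ℝ) → (Fin n → ℝ))   -- the error-bounding polynomial e_p
    (DV : (Fin n → ℝ) → (Fin n → ℝ))  -- the gradient ∂V/∂x of the barrier V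
    (q : (Fin n → ℝ) → (Fin n → ℝ))
    (he : ∀ x ∈ Z, ∀ u ∈ U, ∀ j,
      |f x j - fp x j + ((g x - gp x) *ᵥ u) j| ≤ e x j)
    (hq : ∀ x ∈ Z, ∀ j, |DV x j * e x j| ≤ q x j) :
    ∀ x ∈ Z, ∀ u ∈ U,
      ((∑ j, DV x j * (fp x j + (gp x *ᵥ u) j)) + ∑ j, q x j ≥
        (∑ j, DV x j * (f x j + (g x *ᵥ u) j)) - 2 * (∑ j, q x j) + ∑ j, q x j) ∧
      (0 < (∑ j, DV x j * (fp x j + (gp x *ᵥ u) j)) - ∑ j, q x j →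
        0 < ∑ j, DV x j * (f x j + (g x *ᵥ u) j)) := by
  intro x hx u hu
  have key : |(∑ j, DV x j * (f x j + (g x *ᵥ u) j)) -
      (∑ j, DV x j * (fp x j + (gp x *ᵥ u) j))| ≤ ∑ j, q x j := by
    rw [← Finset.sum_sub_distrib]
    refine (Finset.abs_sum_le_sum_abs _ _).trans (Finset.sum_le_sum fun j _ => ?_)
    have hd : DV x j * (f x j + (g x *ᵥ u) j) - DV x j * (fp x j + (gp x *ᵥ u) j)
        = DV x j * (f x j - fp x j + ((g x - gp x) *ᵥ u) j) := by
      rw [sub_mulVec]; ring_nf; simp [Pi.sub_apply]; ring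
    rw [hd]
    have he' := he x hx u hu j
    have hepos : 0 ≤ e x j := (abs_nonneg _).trans he'
    calc |DV x j * (f x j - fp x j + ((g x - gp x) *ᵥ u) j)|
        = |DV x j| * |f x j - fp x j + ((g x - gp x) *ᵥ u) j| := abs_mul _ _
      _ ≤ |DV x j| * e x j := by
          exact mul_le_mul_of_nonneg_left he' (abs_nonneg _)
      _ = |DV x j * e x j| := by rw [abs_mul, abs_of_nonneg hepos]
      _ ≤ q x j := hq x hx j
  have h1 := abs_le.mp key
  constructor
  · linarith [h1.1, h1.2]
  · intro h; linarith [h1.1, h1.2]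
end
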